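/- arXiv:2010.11622 — 2 statements merged into one kernel-verified Lean document; each statement's English description precedes it below -/
import Mathlib

section
/- Let δ = 2e_0 - e_1 - ... - e_6 in I_{1,6}, and let s_δ be the reflection s_δ(β) = β + (δ·β)δ acting on the set R of 72 roots. Then the action of the group {id, s_δ} on R has exactly 51 orbits: 1 orbit {δ, -δ}, 20 two-element orbits among the 40 roots ±(e_0 - e_i - e_j - e_k), and 30 fixed points e_i - e_j (i ≠ j). -/
/-- The intersection form on the lattice I_{1,6} = ℤ^7: diag(1,-1,-1,-1,-1,-1,-1). -/
def Ip (x y : Fin 7 → ℤ) : ℤ := x 0 * y 0 - ∑ i : Fin 6, x i.succ * y i.succ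

/-- The hyperplane class h = 3e₀ - e₁ - ⋯ - e₆. -/
def hcl : Fin 7 → ℤ := ![3, -1, -1, -1, -1, -1, -1]

/-- The standard basis vector e_i of I_{1,6}. -/
def ee (i : Fin 7) : Fin 7 → ℤ := fun j => if j = i then 1 else 0

/-- The vanishing cycle δ = 2e₀ - e₁ - ⋯ - e₆. -/
def δv : Fin 7 → ℤ := ![2, -1, -1, -1, -1, -1, -1]

/-- The 72 roots. -/
def Rset : Set (Fin 7 → ℤ) := {α | Ip α α = -2 ∧ Ip α hcl = 0}

/-- The Picard–Lefschetz reflection s_δ(β) = β + (δ·β)δ. -/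
def sδ (β : Fin 7 → ℤ) : Fin 7 → ℤ := β + Ip δv β • δv

/-- The orbits of the group {id, s_δ} acting on the 72 roots: since s_δ is an involution,
the orbit of a root α is {α, s_δ α}. -/
def Orb : Set (Set (Fin 7 → ℤ)) := {S | ∃ α ∈ Rset, S = {α, sδ α}}

/-!
Write a root as `α = (a; t₁, …, t₆)`. The root conditions read `∑ tᵢ = -3a` and
`∑ tᵢ² = a² + 2`, so Cauchy–Schwarz gives `|a| ≤ 2`, and `δ·α = -a`, so `s_δ α = α - a δ`
negates `a`. Hence the fixed roots are those with `a = 0`, and each orbit has exactly one member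
with `a ≥ 0`. For `a = 2` the equality case forces `α = δ`; for `a ∈ {0, 1}` every
`tᵢ ∈ {-1, 0, 1}`, and checking the `3⁶` candidate tails gives the 30 roots `eᵢ - eⱼ` and the
20 roots `e₀ - eᵢ - eⱼ - eₖ`. So there are `30 + 20 + 1 = 51` orbits, the free ones other than
`{δ, -δ}` being those of the roots with `a = 1`.
-/

open Finset

lemma Ip_comm (x y : Fin 7 → ℤ) : Ip x y = Ip y x := by
  simp only [Ip, mul_comm]

lemma Ip_add_right (x y z : Fin 7 → ℤ) : Ip x (y + z) = Ip x y + Ip x z := by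
  simp only [Ip, Pi.add_apply, mul_add, sum_add_distrib]
  ring

lemma Ip_smul_right (c : ℤ) (x y : Fin 7 → ℤ) : Ip x (c • y) = c * Ip x y := by
  simp only [Ip, Pi.smul_apply, smul_eq_mul, mul_sum, mul_sub]
  simp only [mul_left_comm]

lemma Ip_add_left (x y z : Fin 7 → ℤ) : Ip (x + y) z = Ip x z + Ip y z := by
  rw [Ip_comm, Ip_add_right, Ip_comm z, Ip_comm z]

lemma Ip_smul_left (c : ℤ) (x y : Fin 7 → ℤ) : Ip (c • x) y = c * Ip x y := by
  rw [Ip_comm, Ip_smul_right, Ip_comm]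

lemma Ip_of_succ_eq_neg_one {v : Fin 7 → ℤ} (hv : ∀ i : Fin 6, v i.succ = -1) (x : Fin 7 → ℤ) :
    Ip x v = x 0 * v 0 + ∑ i : Fin 6, x i.succ := by
  have h : ∑ i : Fin 6, x i.succ * v i.succ = -∑ i : Fin 6, x i.succ := by
    rw [← sum_neg_distrib]
    exact sum_congr rfl fun i _ => by rw [hv, mul_neg_one]
  rw [Ip, h, sub_neg_eq_add]

lemma Ip_hcl (x : Fin 7 → ℤ) : Ip x hcl = 3 * x 0 + ∑ i : Fin 6, x i.succ := by
  rw [Ip_of_succ_eq_neg_one (by decide), show hcl 0 = 3 from rfl, mul_comm]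

lemma Ip_δv_left (x : Fin 7 → ℤ) : Ip δv x = 2 * x 0 + ∑ i : Fin 6, x i.succ := by
  rw [Ip_comm, Ip_of_succ_eq_neg_one (by decide), show δv 0 = 2 from rfl, mul_comm]

lemma Ip_δv_sδ (β : Fin 7 → ℤ) : Ip δv (sδ β) = -Ip δv β := by
  rw [sδ, Ip_add_right, Ip_smul_right, show Ip δv δv = -2 by decide]
  ring

lemma sδ_sδ (β : Fin 7 → ℤ) : sδ (sδ β) = β := by
  rw [sδ, Ip_δv_sδ, sδ, neg_smul, add_neg_cancel_right]

lemma Ip_sδ_sδ (x y : Fin 7 → ℤ) : Ip (sδ x) (sδ y) = Ip x y := by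
  have hδ : Ip δv δv = -2 := by decide
  simp only [sδ, Ip_add_left, Ip_add_right, Ip_smul_left, Ip_smul_right]
  rw [hδ, Ip_comm x δv]
  ring

lemma Ip_sδ_hcl (x : Fin 7 → ℤ) : Ip (sδ x) hcl = Ip x hcl := by
  rw [sδ, Ip_add_left, Ip_smul_left, show Ip δv hcl = 0 by decide, mul_zero, add_zero]

lemma sδ_mem_Rset {α : Fin 7 → ℤ} (hα : α ∈ Rset) : sδ α ∈ Rset :=
  ⟨(Ip_sδ_sδ α α).trans hα.1, (Ip_sδ_hcl α).trans hα.2⟩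

lemma sδ_δv : sδ δv = -δv := by decide

lemma δv_mem_Rset : δv ∈ Rset := ⟨by decide, by decide⟩

lemma mem_Rset_iff {α : Fin 7 → ℤ} :
    α ∈ Rset ↔ ∑ i : Fin 6, α i.succ = -3 * α 0 ∧ ∑ i : Fin 6, α i.succ ^ 2 = α 0 ^ 2 + 2 := by
  change Ip α α = -2 ∧ Ip α hcl = 0 ↔ _
  rw [Ip_hcl, Ip]
  simp only [← sq]
  constructor <;> rintro ⟨h₁, h₂⟩ <;> constructor <;> linarith

lemma neg_mem_Rset {α : Fin 7 → ℤ} (hα : α ∈ Rset) : -α ∈ Rset := by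
  obtain ⟨h₁, h₂⟩ := mem_Rset_iff.1 hα
  refine mem_Rset_iff.2 ⟨?_, ?_⟩ <;> simp only [Pi.neg_apply, sum_neg_distrib, neg_sq] <;> linarith

lemma Ip_δv_of_mem_Rset {α : Fin 7 → ℤ} (hα : α ∈ Rset) : Ip δv α = -α 0 := by
  rw [Ip_δv_left, (mem_Rset_iff.1 hα).1]
  ring

lemma sδ_apply_zero {α : Fin 7 → ℤ} (hα : α ∈ Rset) : sδ α 0 = -α 0 := by
  simp only [sδ, Pi.add_apply, Pi.smul_apply, smul_eq_mul, Ip_δv_of_mem_Rset hα,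
    show δv 0 = 2 from rfl]
  ring

lemma sδ_eq_self_iff {α : Fin 7 → ℤ} (hα : α ∈ Rset) : sδ α = α ↔ α 0 = 0 := by
  refine ⟨fun h => ?_, fun h => ?_⟩
  · have h₀ := congrFun h 0
    rw [sδ_apply_zero hα] at h₀
    linarith
  · rw [sδ, Ip_δv_of_mem_Rset hα, h, neg_zero, zero_smul, add_zero]

lemma apply_zero_mem_Icc {α : Fin 7 → ℤ} (hα : α ∈ Rset) : α 0 ∈ Set.Icc (-2) 2 := by
  obtain ⟨h₁, h₂⟩ := mem_Rset_iff.1 hα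
  have cauchy_schwarz := sq_sum_le_card_mul_sum_sq (s := univ) (f := fun i : Fin 6 => α i.succ)
  rw [h₁, h₂, card_univ, Fintype.card_fin, Nat.cast_ofNat] at cauchy_schwarz
  constructor <;> nlinarith

lemma eq_δv_of_apply_zero_eq_two {α : Fin 7 → ℤ} (hα : α ∈ Rset) (h₀ : α 0 = 2) : α = δv := by
  obtain ⟨h₁, h₂⟩ := mem_Rset_iff.1 hα
  have h : ∑ i : Fin 6, (α i.succ + 1) ^ 2 = 0 := by
    simp only [add_sq, sum_add_distrib, ← mul_sum, mul_one, one_pow, sum_const,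
      card_univ, Fintype.card_fin, h₁, h₂, h₀, nsmul_eq_mul]
    norm_num
  have h_succ : ∀ i : Fin 6, α i.succ = -1 := fun i => by
    have := (sum_eq_zero_iff_of_nonneg fun j _ => sq_nonneg (α j.succ + 1)).1 h i (mem_univ i)
    linarith [pow_eq_zero_iff (n := 2) two_ne_zero |>.1 this]
  funext i
  refine Fin.cases h₀ (fun i => ?_) i
  rw [h_succ]
  revert i
  decide

lemma tail_mem_piFinset {α : Fin 7 → ℤ} (hα : α ∈ Rset) (h₀ : α 0 ^ 2 ≤ 1) :
    Fin.tail α ∈ Fintype.piFinset fun _ : Fin 6 => ({-1, 0, 1} : Finset ℤ) := by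
  refine Fintype.mem_piFinset.2 fun i => ?_
  have h_le : α i.succ ^ 2 ≤ ∑ j : Fin 6, α j.succ ^ 2 :=
    single_le_sum (fun j _ => sq_nonneg (α j.succ)) (mem_univ i)
  rw [(mem_Rset_iff.1 hα).2] at h_le
  have : -1 ≤ α i.succ ∧ α i.succ ≤ 1 := ⟨by nlinarith, by nlinarith⟩
  simp only [Fin.tail, mem_insert, mem_singleton]
  omega

def tri (i j k : Fin 6) : Fin 7 → ℤ := ee 0 - ee i.succ - ee j.succ - ee k.succ

set_option maxRecDepth 8000 in
lemma exists_cons_zero_eq_ee_sub_ee :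
    ∀ t ∈ Fintype.piFinset fun _ : Fin 6 => ({-1, 0, 1} : Finset ℤ),
      ∑ i, t i = 0 → ∑ i, t i ^ 2 = 2 →
      ∃ i j : Fin 6, i ≠ j ∧ (Fin.cons 0 t : Fin 7 → ℤ) = ee i.succ - ee j.succ := by
  decide

set_option maxRecDepth 8000 in
lemma exists_cons_one_eq_tri :
    ∀ t ∈ Fintype.piFinset fun _ : Fin 6 => ({-1, 0, 1} : Finset ℤ),
      ∑ i, t i = -3 → ∑ i, t i ^ 2 = 3 →
      ∃ i j k : Fin 6, i < j ∧ j < k ∧ (Fin.cons 1 t : Fin 7 → ℤ) = tri i j k := by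
  decide

def rootsZero : Finset (Fin 7 → ℤ) :=
  univ.offDiag.image fun p : Fin 6 × Fin 6 => ee p.1.succ - ee p.2.succ

def rootsOne : Finset (Fin 7 → ℤ) :=
  (univ.filter fun p : Fin 6 × Fin 6 × Fin 6 => p.1 < p.2.1 ∧ p.2.1 < p.2.2).image
    fun p => tri p.1 p.2.1 p.2.2

lemma mem_rootsZero {α : Fin 7 → ℤ} :
    α ∈ rootsZero ↔ ∃ i j : Fin 6, i ≠ j ∧ α = ee i.succ - ee j.succ := by
  simp [rootsZero, eq_comm]

lemma mem_rootsOne {α : Fin 7 → ℤ} :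
    α ∈ rootsOne ↔ ∃ i j k : Fin 6, i < j ∧ j < k ∧ α = tri i j k := by
  simp [rootsOne, eq_comm, and_assoc]

lemma card_rootsZero : rootsZero.card = 30 := by decide

lemma card_rootsOne : rootsOne.card = 20 := by decide

set_option maxRecDepth 8000 in
lemma card_insert_δv_rootsZero_union_rootsOne : (insert δv (rootsZero ∪ rootsOne)).card = 51 := by
  decide

lemma coe_rootsZero : (rootsZero : Set (Fin 7 → ℤ)) = {α ∈ Rset | α 0 = 0} := by
  ext α
  simp only [mem_coe, mem_rootsZero, Set.mem_sep_iff]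
  constructor
  · rintro ⟨i, j, hij, rfl⟩
    have h : ∀ i j : Fin 6, i ≠ j → Ip (ee i.succ - ee j.succ) (ee i.succ - ee j.succ) = -2 ∧
        Ip (ee i.succ - ee j.succ) hcl = 0 ∧ (ee i.succ - ee j.succ) 0 = 0 := by decide
    obtain ⟨h₁, h₂, h₀⟩ := h i j hij
    exact ⟨⟨h₁, h₂⟩, h₀⟩
  · rintro ⟨hα, h₀⟩
    obtain ⟨h₁, h₂⟩ := mem_Rset_iff.1 hα
    rw [h₀] at h₁ h₂
    rw [← Fin.cons_self_tail α, h₀]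
    exact exists_cons_zero_eq_ee_sub_ee _ (tail_mem_piFinset hα (by rw [h₀]; norm_num))
      (by simpa [Fin.tail] using h₁) (by simpa [Fin.tail] using h₂)

lemma coe_rootsOne : (rootsOne : Set (Fin 7 → ℤ)) = {α ∈ Rset | α 0 = 1} := by
  ext α
  simp only [mem_coe, mem_rootsOne, Set.mem_sep_iff]
  constructor
  · rintro ⟨i, j, k, hij, hjk, rfl⟩
    have h : ∀ i j k : Fin 6, i < j → j < k → Ip (tri i j k) (tri i j k) = -2 ∧
        Ip (tri i j k) hcl = 0 ∧ tri i j k 0 = 1 := by decide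
    obtain ⟨h₁, h₂, h₀⟩ := h i j k hij hjk
    exact ⟨⟨h₁, h₂⟩, h₀⟩
  · rintro ⟨hα, h₀⟩
    obtain ⟨h₁, h₂⟩ := mem_Rset_iff.1 hα
    rw [h₀] at h₁ h₂
    rw [← Fin.cons_self_tail α, h₀]
    exact exists_cons_one_eq_tri _ (tail_mem_piFinset hα (by rw [h₀]; norm_num))
      (by simpa [Fin.tail] using h₁) (by simpa [Fin.tail] using h₂)

lemma setOf_apply_zero_nonneg :
    {α ∈ Rset | 0 ≤ α 0} = ↑(insert δv (rootsZero ∪ rootsOne)) := by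
  ext α
  rw [coe_insert, coe_union, coe_rootsZero, coe_rootsOne]
  simp only [Set.mem_sep_iff, Set.mem_insert_iff, Set.mem_union]
  constructor
  · rintro ⟨hα, h₀⟩
    obtain ⟨-, h₂⟩ := apply_zero_mem_Icc hα
    obtain h | h | h : α 0 = 0 ∨ α 0 = 1 ∨ α 0 = 2 := by omega
    exacts [Or.inr (Or.inl ⟨hα, h⟩), Or.inr (Or.inr ⟨hα, h⟩),
      Or.inl (eq_δv_of_apply_zero_eq_two hα h)]
  · rintro (rfl | ⟨hα, h₀⟩ | ⟨hα, h₀⟩)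
    · exact ⟨δv_mem_Rset, by decide⟩
    all_goals exact ⟨hα, by omega⟩

def sδOrbit (α : Fin 7 → ℤ) : Set (Fin 7 → ℤ) := {α, sδ α}

lemma sδOrbit_sδ (α : Fin 7 → ℤ) : sδOrbit (sδ α) = sδOrbit α := by
  rw [sδOrbit, sδ_sδ, Set.pair_comm, sδOrbit]

lemma sδOrbit_δv : sδOrbit δv = {δv, -δv} := by
  rw [sδOrbit, sδ_δv]

lemma mem_Rset_of_mem_sδOrbit {α β : Fin 7 → ℤ} (hα : α ∈ Rset) (hβ : β ∈ sδOrbit α) :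
    β ∈ Rset ∧ (β 0 = α 0 ∨ β 0 = -α 0) := by
  rcases hβ with rfl | rfl
  · exact ⟨hα, Or.inl rfl⟩
  · exact ⟨sδ_mem_Rset hα, Or.inr (sδ_apply_zero hα)⟩

lemma Orb_eq_image : Orb = sδOrbit '' {α ∈ Rset | 0 ≤ α 0} := by
  ext S
  constructor
  · rintro ⟨α, hα, rfl⟩
    by_cases h₀ : 0 ≤ α 0
    · exact ⟨α, ⟨hα, h₀⟩, rfl⟩
    · refine ⟨sδ α, ⟨sδ_mem_Rset hα, ?_⟩, sδOrbit_sδ α⟩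
      rw [sδ_apply_zero hα]
      omega
  · rintro ⟨α, ⟨hα, -⟩, rfl⟩
    exact ⟨α, hα, rfl⟩

lemma injOn_sδOrbit : Set.InjOn sδOrbit {α ∈ Rset | 0 ≤ α 0} := by
  rintro α ⟨-, hα₀⟩ β ⟨hβ, hβ₀⟩ h
  rcases Set.pair_eq_pair_iff.1 h with ⟨h, -⟩ | ⟨h, -⟩
  · exact h
  · have h₀ : β 0 = 0 := by
      have := congrFun h 0
      rw [sδ_apply_zero hβ] at this
      omega
    rw [h, (sδ_eq_self_iff hβ).2 h₀]

lemma ncard_Orb : Orb.ncard = 51 := by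
  rw [Orb_eq_image, injOn_sδOrbit.ncard_image, setOf_apply_zero_nonneg,
    Set.ncard_coe_finset, card_insert_δv_rootsZero_union_rootsOne]

lemma exists_apply_zero_eq_one_of_mem_Orb {S : Set (Fin 7 → ℤ)} (hS : S ∈ Orb)
    (hne : S ≠ {δv, -δv}) {α : Fin 7 → ℤ} (hα : α ∈ S) (hfix : sδ α ≠ α) :
    ∃ β ∈ Rset, β 0 = 1 ∧ S = sδOrbit β := by
  rw [Orb_eq_image] at hS
  obtain ⟨β, ⟨hβ, hβ₀⟩, rfl⟩ := hS
  obtain ⟨hα', hαβ⟩ := mem_Rset_of_mem_sδOrbit hβ hα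
  have h_ne_zero : α 0 ≠ 0 := fun h => hfix ((sδ_eq_self_iff hα').2 h)
  have h_ne_two : β 0 ≠ 2 := fun h => hne (by rw [eq_δv_of_apply_zero_eq_two hβ h, sδOrbit_δv])
  obtain ⟨-, h_le⟩ := apply_zero_mem_Icc hβ
  exact ⟨β, hβ, by omega, rfl⟩

lemma setOf_free_eq_image :
    {S ∈ Orb | S ≠ {δv, -δv} ∧ ∀ α ∈ S, sδ α ≠ α} = sδOrbit '' {α ∈ Rset | α 0 = 1} := by
  ext S
  constructor
  · rintro ⟨hS, hne, hfree⟩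
    obtain ⟨α, hα, rfl⟩ := hS
    obtain ⟨β, hβ, hβ₀, hSβ⟩ :=
      exists_apply_zero_eq_one_of_mem_Orb ⟨α, hα, rfl⟩ hne (Set.mem_insert α _) (hfree α (Set.mem_insert α _))
    exact ⟨β, ⟨hβ, hβ₀⟩, hSβ.symm⟩
  · rintro ⟨α, ⟨hα, hα₀⟩, rfl⟩
    refine ⟨⟨α, hα, rfl⟩, fun h => ?_, fun β hβ => ?_⟩
    · have hδ : α ∈ ({δv, -δv} : Set (Fin 7 → ℤ)) := h ▸ Set.mem_insert α _
      rcases hδ with rfl | rfl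
      · exact absurd hα₀ (by decide)
      · exact absurd hα₀ (by decide)
    · obtain ⟨hβ', hβ₀⟩ := mem_Rset_of_mem_sδOrbit hα hβ
      rw [Ne, sδ_eq_self_iff hβ']
      omega

lemma ncard_setOf_free : {S ∈ Orb | S ≠ {δv, -δv} ∧ ∀ α ∈ S, sδ α ≠ α}.ncard = 20 := by
  have h_sub : {α ∈ Rset | α 0 = 1} ⊆ {α ∈ Rset | 0 ≤ α 0} :=
    fun α ⟨hα, hα₀⟩ => ⟨hα, by omega⟩
  rw [setOf_free_eq_image, (injOn_sδOrbit.mono h_sub).ncard_image, ← coe_rootsOne,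
    Set.ncard_coe_finset, card_rootsOne]

lemma setOf_sδ_eq_self : {α ∈ Rset | sδ α = α} = ↑rootsZero := by
  rw [coe_rootsZero]
  exact Set.sep_ext_iff.2 fun α hα => sδ_eq_self_iff hα

/-- The action of {id, s_δ} on the 72 roots has exactly 51 orbits: the orbit {δ, -δ},
30 fixed points (the roots e_i - e_j, i ≠ j), and 20 further two-element orbits
(among the 40 roots ±(e₀ - e_i - e_j - e_k)). -/
theorem A1_monodromy_orbits :
    Orb.ncard = 51 ∧
    ({δv, -δv} : Set (Fin 7 → ℤ)) ∈ Orb ∧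
    {α ∈ Rset | sδ α = α}
      = {α | ∃ i j : Fin 6, i ≠ j ∧ α = ee i.succ - ee j.succ} ∧
    {α ∈ Rset | sδ α = α}.ncard = 30 ∧
    {S ∈ Orb | S ≠ {δv, -δv} ∧ ∀ α ∈ S, sδ α ≠ α}.ncard = 20 ∧
    (∀ S ∈ Orb, S ≠ ({δv, -δv} : Set (Fin 7 → ℤ)) → ∀ α ∈ S, sδ α ≠ α →
      ∃ i j k : Fin 6, i < j ∧ j < k ∧
        (α = ee 0 - ee i.succ - ee j.succ - ee k.succ ∨
         α = -(ee 0 - ee i.succ - ee j.succ - ee k.succ))) := by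
  refine ⟨ncard_Orb, ⟨δv, δv_mem_Rset, sδOrbit_δv.symm⟩, ?_, ?_, ncard_setOf_free, ?_⟩
  · rw [setOf_sδ_eq_self]
    exact Set.ext fun α => mem_rootsZero
  · rw [setOf_sδ_eq_self, Set.ncard_coe_finset, card_rootsZero]
  · intro S hS hne α hα hfix
    obtain ⟨β, hβ, hβ₀, rfl⟩ := exists_apply_zero_eq_one_of_mem_Orb hS hne hα hfix
    obtain ⟨hα', hα₀ | hα₀⟩ := mem_Rset_of_mem_sδOrbit hβ hα
    · have : α ∈ rootsOne := by rw [← mem_coe, coe_rootsOne]; exact ⟨hα', hα₀.trans hβ₀⟩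
      obtain ⟨i, j, k, hij, hjk, rfl⟩ := mem_rootsOne.1 this
      exact ⟨i, j, k, hij, hjk, Or.inl rfl⟩
    · have : -α ∈ rootsOne := by
        rw [← mem_coe, coe_rootsOne]
        exact ⟨neg_mem_Rset hα', by rw [Pi.neg_apply, hα₀, hβ₀, neg_neg]⟩
      obtain ⟨i, j, k, hij, hjk, h⟩ := mem_rootsOne.1 this
      exact ⟨i, j, k, hij, hjk, Or.inr (neg_eq_iff_eq_neg.1 h)⟩
end

section
/- In the root system R(E6) ⊂ I_{1,6}, let W_e be the group generated by the reflections s_{α_1} and s_{α_2} for the orthogonal roots α_1 = e_1 - e_2 and α_2 = e_3 - e_4 (a sub-root-system of type A_1 + A_1 = 2A_1). Then the action of W_e on the 72 roots has exactly 36 orbits. -/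
set_option maxRecDepth 100000
set_option maxHeartbeats 4000000

/-- The reflection s_a(β) = β + (a·β)a. -/
def pl (a β : Fin 7 → ℤ) : Fin 7 → ℤ := β + Ip a β • a

/-- Reflection in the root α₁ = e₁ - e₂. -/
def r1 : (Fin 7 → ℤ) → (Fin 7 → ℤ) := pl (ee 1 - ee 2)

/-- Reflection in the root α₂ = e₃ - e₄. -/
def r2 : (Fin 7 → ℤ) → (Fin 7 → ℤ) := pl (ee 3 - ee 4)

def sw12 (v : Fin 7 → ℤ) : Fin 7 → ℤ := fun i => if i = 1 then v 2 else if i = 2 then v 1 else v i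
def sw34 (v : Fin 7 → ℤ) : Fin 7 → ℤ := fun i => if i = 3 then v 4 else if i = 4 then v 3 else v i

def Lf : Finset (Fin 7 → ℤ) := {![-2, 1, 1, 1, 1, 1, 1],
  ![-1, 0, 0, 0, 1, 1, 1],
  ![-1, 0, 0, 1, 0, 1, 1],
  ![-1, 0, 0, 1, 1, 0, 1],
  ![-1, 0, 0, 1, 1, 1, 0],
  ![-1, 0, 1, 0, 0, 1, 1],
  ![-1, 0, 1, 0, 1, 0, 1],
  ![-1, 0, 1, 0, 1, 1, 0],
  ![-1, 0, 1, 1, 0, 0, 1],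
  ![-1, 0, 1, 1, 0, 1, 0],
  ![-1, 0, 1, 1, 1, 0, 0],
  ![-1, 1, 0, 0, 0, 1, 1],
  ![-1, 1, 0, 0, 1, 0, 1],
  ![-1, 1, 0, 0, 1, 1, 0],
  ![-1, 1, 0, 1, 0, 0, 1],
  ![-1, 1, 0, 1, 0, 1, 0],
  ![-1, 1, 0, 1, 1, 0, 0],
  ![-1, 1, 1, 0, 0, 0, 1],
  ![-1, 1, 1, 0, 0, 1, 0],
  ![-1, 1, 1, 0, 1, 0, 0],
  ![-1, 1, 1, 1, 0, 0, 0],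
  ![0, -1, 0, 0, 0, 0, 1],
  ![0, -1, 0, 0, 0, 1, 0],
  ![0, -1, 0, 0, 1, 0, 0],
  ![0, -1, 0, 1, 0, 0, 0],
  ![0, -1, 1, 0, 0, 0, 0],
  ![0, 0, -1, 0, 0, 0, 1],
  ![0, 0, -1, 0, 0, 1, 0],
  ![0, 0, -1, 0, 1, 0, 0],
  ![0, 0, -1, 1, 0, 0, 0],
  ![0, 0, 0, -1, 0, 0, 1],
  ![0, 0, 0, -1, 0, 1, 0],
  ![0, 0, 0, -1, 1, 0, 0],
  ![0, 0, 0, 0, -1, 0, 1],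
  ![0, 0, 0, 0, -1, 1, 0],
  ![0, 0, 0, 0, 0, -1, 1],
  ![0, 0, 0, 0, 0, 1, -1],
  ![0, 0, 0, 0, 1, -1, 0],
  ![0, 0, 0, 0, 1, 0, -1],
  ![0, 0, 0, 1, -1, 0, 0],
  ![0, 0, 0, 1, 0, -1, 0],
  ![0, 0, 0, 1, 0, 0, -1],
  ![0, 0, 1, -1, 0, 0, 0],
  ![0, 0, 1, 0, -1, 0, 0],
  ![0, 0, 1, 0, 0, -1, 0],
  ![0, 0, 1, 0, 0, 0, -1],
  ![0, 1, -1, 0, 0, 0, 0],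
  ![0, 1, 0, -1, 0, 0, 0],
  ![0, 1, 0, 0, -1, 0, 0],
  ![0, 1, 0, 0, 0, -1, 0],
  ![0, 1, 0, 0, 0, 0, -1],
  ![1, -1, -1, -1, 0, 0, 0],
  ![1, -1, -1, 0, -1, 0, 0],
  ![1, -1, -1, 0, 0, -1, 0],
  ![1, -1, -1, 0, 0, 0, -1],
  ![1, -1, 0, -1, -1, 0, 0],
  ![1, -1, 0, -1, 0, -1, 0],
  ![1, -1, 0, -1, 0, 0, -1],
  ![1, -1, 0, 0, -1, -1, 0],
  ![1, -1, 0, 0, -1, 0, -1],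
  ![1, -1, 0, 0, 0, -1, -1],
  ![1, 0, -1, -1, -1, 0, 0],
  ![1, 0, -1, -1, 0, -1, 0],
  ![1, 0, -1, -1, 0, 0, -1],
  ![1, 0, -1, 0, -1, -1, 0],
  ![1, 0, -1, 0, -1, 0, -1],
  ![1, 0, -1, 0, 0, -1, -1],
  ![1, 0, 0, -1, -1, -1, 0],
  ![1, 0, 0, -1, -1, 0, -1],
  ![1, 0, 0, -1, 0, -1, -1],
  ![1, 0, 0, 0, -1, -1, -1],
  ![2, -1, -1, -1, -1, -1, -1]}

def orbF (v : Fin 7 → ℤ) : Finset (Fin 7 → ℤ) := {v, sw12 v, sw34 v, sw12 (sw34 v)}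

def tz : Fin 3 → ℤ := ![-1, 0, 1]

lemma r1_eq : r1 = sw12 := by
  funext β i
  fin_cases i <;>
    simp [r1, pl, Ip, ee, sw12, Fin.sum_univ_six, show (Fin.succ 0 : Fin 7) = 1 from rfl,
      show (Fin.succ 1 : Fin 7) = 2 from rfl, show (Fin.succ 2 : Fin 7) = 3 from rfl,
      show (Fin.succ 3 : Fin 7) = 4 from rfl, show (Fin.succ 4 : Fin 7) = 5 from rfl,
      show (Fin.succ 5 : Fin 7) = 6 from rfl] <;> ring

lemma r2_eq : r2 = sw34 := by
  funext β i
  fin_cases i <;>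
    simp [r2, pl, Ip, ee, sw34, Fin.sum_univ_six, show (Fin.succ 0 : Fin 7) = 1 from rfl,
      show (Fin.succ 1 : Fin 7) = 2 from rfl, show (Fin.succ 2 : Fin 7) = 3 from rfl,
      show (Fin.succ 3 : Fin 7) = 4 from rfl, show (Fin.succ 4 : Fin 7) = 5 from rfl,
      show (Fin.succ 5 : Fin 7) = 6 from rfl] <;> ring

lemma big : ∀ g0 g1 g2 g3 g4 g5 g6 : Fin 3,
    tz g0 * tz g0 - (tz g1 * tz g1 + tz g2 * tz g2 + tz g3 * tz g3 + tz g4 * tz g4 +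
      tz g5 * tz g5 + tz g6 * tz g6) = -2 →
    tz g0 * 3 - (-tz g1 + -tz g2 + -tz g3 + -tz g4 + -tz g5 + -tz g6) = 0 →
    ![tz g0, tz g1, tz g2, tz g3, tz g4, tz g5, tz g6] ∈ Lf := by decide

lemma tz_surj : ∀ x : ℤ, -1 ≤ x → x ≤ 1 → ∃ g : Fin 3, tz g = x := by
  intro x hx hx'
  rcases (by omega : x = -1 ∨ x = 0 ∨ x = 1) with rfl | rfl | rfl
  exacts [⟨0, rfl⟩, ⟨1, rfl⟩, ⟨2, rfl⟩]

lemma vec_eta (α : Fin 7 → ℤ) : α = ![α 0, α 1, α 2, α 3, α 4, α 5, α 6] := by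
  funext i; fin_cases i <;> rfl

lemma Rsub : ∀ α ∈ Rset, α ∈ Lf := by
  intro α hα
  obtain ⟨h1, h2⟩ := hα
  simp [Ip, hcl, Fin.sum_univ_six, show (Fin.succ 0 : Fin 7) = 1 from rfl,
    show (Fin.succ 1 : Fin 7) = 2 from rfl, show (Fin.succ 2 : Fin 7) = 3 from rfl,
    show (Fin.succ 3 : Fin 7) = 4 from rfl, show (Fin.succ 4 : Fin 7) = 5 from rfl,
    show (Fin.succ 5 : Fin 7) = 6 from rfl,
    show (![(-1 : ℤ), -1, -1, -1, -1, -1] 5) = -1 from rfl] at h1 h2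
  have hsum : α 1 + α 2 + α 3 + α 4 + α 5 + α 6 = -3 * α 0 := by linarith
  have hsq : (α 1 + α 2 + α 3 + α 4 + α 5 + α 6) * (α 1 + α 2 + α 3 + α 4 + α 5 + α 6) = 9 * (α 0 * α 0) := by rw [hsum]; ring
  have hq : α 0 * α 0 ≤ 4 := by linarith [hsq, sq_nonneg (α 1 - α 2), sq_nonneg (α 1 - α 3), sq_nonneg (α 1 - α 4), sq_nonneg (α 1 - α 5), sq_nonneg (α 1 - α 6), sq_nonneg (α 2 - α 3), sq_nonneg (α 2 - α 4), sq_nonneg (α 2 - α 5), sq_nonneg (α 2 - α 6), sq_nonneg (α 3 - α 4), sq_nonneg (α 3 - α 5), sq_nonneg (α 3 - α 6), sq_nonneg (α 4 - α 5), sq_nonneg (α 4 - α 6), sq_nonneg (α 5 - α 6)]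
  have d0 : -2 ≤ α 0 ∧ α 0 ≤ 2 := by
    constructor <;> nlinarith [hq, sq_nonneg (α 0 - 2), sq_nonneg (α 0 + 2)]
  rcases (by omega : α 0 = -2 ∨ α 0 = 2 ∨ (-1 ≤ α 0 ∧ α 0 ≤ 1)) with h0 | h0 | h0
  · rw [h0] at h1 h2
    have hs : (α 1 - (1))^2 + (α 2 - (1))^2 + (α 3 - (1))^2 + (α 4 - (1))^2 + (α 5 - (1))^2 + (α 6 - (1))^2 = 0 := by linear_combination -h1 - 2*h2
    have e1 : α 1 = (1) := by
      have h' : (α 1 - (1))^2 = 0 := le_antisymm (by linarith [hs, sq_nonneg (α 2 - (1)), sq_nonneg (α 3 - (1)), sq_nonneg (α 4 - (1)), sq_nonneg (α 5 - (1)), sq_nonneg (α 6 - (1))]) (sq_nonneg _)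
      have := sq_eq_zero_iff.mp h'
      linarith
    have e2 : α 2 = (1) := by
      have h' : (α 2 - (1))^2 = 0 := le_antisymm (by linarith [hs, sq_nonneg (α 1 - (1)), sq_nonneg (α 3 - (1)), sq_nonneg (α 4 - (1)), sq_nonneg (α 5 - (1)), sq_nonneg (α 6 - (1))]) (sq_nonneg _)
      have := sq_eq_zero_iff.mp h'
      linarith
    have e3 : α 3 = (1) := by
      have h' : (α 3 - (1))^2 = 0 := le_antisymm (by linarith [hs, sq_nonneg (α 1 - (1)), sq_nonneg (α 2 - (1)), sq_nonneg (α 4 - (1)), sq_nonneg (α 5 - (1)), sq_nonneg (α 6 - (1))]) (sq_nonneg _)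
      have := sq_eq_zero_iff.mp h'
      linarith
    have e4 : α 4 = (1) := by
      have h' : (α 4 - (1))^2 = 0 := le_antisymm (by linarith [hs, sq_nonneg (α 1 - (1)), sq_nonneg (α 2 - (1)), sq_nonneg (α 3 - (1)), sq_nonneg (α 5 - (1)), sq_nonneg (α 6 - (1))]) (sq_nonneg _)
      have := sq_eq_zero_iff.mp h'
      linarith
    have e5 : α 5 = (1) := by
      have h' : (α 5 - (1))^2 = 0 := le_antisymm (by linarith [hs, sq_nonneg (α 1 - (1)), sq_nonneg (α 2 - (1)), sq_nonneg (α 3 - (1)), sq_nonneg (α 4 - (1)), sq_nonneg (α 6 - (1))]) (sq_nonneg _)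
      have := sq_eq_zero_iff.mp h'
      linarith
    have e6 : α 6 = (1) := by
      have h' : (α 6 - (1))^2 = 0 := le_antisymm (by linarith [hs, sq_nonneg (α 1 - (1)), sq_nonneg (α 2 - (1)), sq_nonneg (α 3 - (1)), sq_nonneg (α 4 - (1)), sq_nonneg (α 5 - (1))]) (sq_nonneg _)
      have := sq_eq_zero_iff.mp h'
      linarith
    rw [vec_eta α, h0, e1, e2, e3, e4, e5, e6]
    decide
  · rw [h0] at h1 h2
    have hs : (α 1 - (-1))^2 + (α 2 - (-1))^2 + (α 3 - (-1))^2 + (α 4 - (-1))^2 + (α 5 - (-1))^2 + (α 6 - (-1))^2 = 0 := by linear_combination -h1 + 2*h2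
    have e1 : α 1 = (-1) := by
      have h' : (α 1 - (-1))^2 = 0 := le_antisymm (by linarith [hs, sq_nonneg (α 2 - (-1)), sq_nonneg (α 3 - (-1)), sq_nonneg (α 4 - (-1)), sq_nonneg (α 5 - (-1)), sq_nonneg (α 6 - (-1))]) (sq_nonneg _)
      have := sq_eq_zero_iff.mp h'
      linarith
    have e2 : α 2 = (-1) := by
      have h' : (α 2 - (-1))^2 = 0 := le_antisymm (by linarith [hs, sq_nonneg (α 1 - (-1)), sq_nonneg (α 3 - (-1)), sq_nonneg (α 4 - (-1)), sq_nonneg (α 5 - (-1)), sq_nonneg (α 6 - (-1))]) (sq_nonneg _)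
      have := sq_eq_zero_iff.mp h'
      linarith
    have e3 : α 3 = (-1) := by
      have h' : (α 3 - (-1))^2 = 0 := le_antisymm (by linarith [hs, sq_nonneg (α 1 - (-1)), sq_nonneg (α 2 - (-1)), sq_nonneg (α 4 - (-1)), sq_nonneg (α 5 - (-1)), sq_nonneg (α 6 - (-1))]) (sq_nonneg _)
      have := sq_eq_zero_iff.mp h'
      linarith
    have e4 : α 4 = (-1) := by
      have h' : (α 4 - (-1))^2 = 0 := le_antisymm (by linarith [hs, sq_nonneg (α 1 - (-1)), sq_nonneg (α 2 - (-1)), sq_nonneg (α 3 - (-1)), sq_nonneg (α 5 - (-1)), sq_nonneg (α 6 - (-1))]) (sq_nonneg _)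
      have := sq_eq_zero_iff.mp h'
      linarith
    have e5 : α 5 = (-1) := by
      have h' : (α 5 - (-1))^2 = 0 := le_antisymm (by linarith [hs, sq_nonneg (α 1 - (-1)), sq_nonneg (α 2 - (-1)), sq_nonneg (α 3 - (-1)), sq_nonneg (α 4 - (-1)), sq_nonneg (α 6 - (-1))]) (sq_nonneg _)
      have := sq_eq_zero_iff.mp h'
      linarith
    have e6 : α 6 = (-1) := by
      have h' : (α 6 - (-1))^2 = 0 := le_antisymm (by linarith [hs, sq_nonneg (α 1 - (-1)), sq_nonneg (α 2 - (-1)), sq_nonneg (α 3 - (-1)), sq_nonneg (α 4 - (-1)), sq_nonneg (α 5 - (-1))]) (sq_nonneg _)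
      have := sq_eq_zero_iff.mp h'
      linarith
    rw [vec_eta α, h0, e1, e2, e3, e4, e5, e6]
    decide
  · have ha0sq : α 0 * α 0 ≤ 1 := by nlinarith [mul_nonneg (by linarith [h0.1] : (0:ℤ) ≤ 1 + α 0) (by linarith [h0.2] : (0:ℤ) ≤ 1 - α 0)]
    have s1 : α 1 * α 1 ≤ 3 := by linarith [h1, ha0sq, sq_nonneg (α 2), sq_nonneg (α 3), sq_nonneg (α 4), sq_nonneg (α 5), sq_nonneg (α 6)]
    have c1 : -1 ≤ α 1 ∧ α 1 ≤ 1 := by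
      have u : 4 * α 1 ≤ 7 := by linarith [s1, sq_nonneg (α 1 - 2)]
      have l : -7 ≤ 4 * α 1 := by linarith [s1, sq_nonneg (α 1 + 2)]
      omega
    have s2 : α 2 * α 2 ≤ 3 := by linarith [h1, ha0sq, sq_nonneg (α 1), sq_nonneg (α 3), sq_nonneg (α 4), sq_nonneg (α 5), sq_nonneg (α 6)]
    have c2 : -1 ≤ α 2 ∧ α 2 ≤ 1 := by
      have u : 4 * α 2 ≤ 7 := by linarith [s2, sq_nonneg (α 2 - 2)]
      have l : -7 ≤ 4 * α 2 := by linarith [s2, sq_nonneg (α 2 + 2)]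
      omega
    have s3 : α 3 * α 3 ≤ 3 := by linarith [h1, ha0sq, sq_nonneg (α 1), sq_nonneg (α 2), sq_nonneg (α 4), sq_nonneg (α 5), sq_nonneg (α 6)]
    have c3 : -1 ≤ α 3 ∧ α 3 ≤ 1 := by
      have u : 4 * α 3 ≤ 7 := by linarith [s3, sq_nonneg (α 3 - 2)]
      have l : -7 ≤ 4 * α 3 := by linarith [s3, sq_nonneg (α 3 + 2)]
      omega
    have s4 : α 4 * α 4 ≤ 3 := by linarith [h1, ha0sq, sq_nonneg (α 1), sq_nonneg (α 2), sq_nonneg (α 3), sq_nonneg (α 5), sq_nonneg (α 6)]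
    have c4 : -1 ≤ α 4 ∧ α 4 ≤ 1 := by
      have u : 4 * α 4 ≤ 7 := by linarith [s4, sq_nonneg (α 4 - 2)]
      have l : -7 ≤ 4 * α 4 := by linarith [s4, sq_nonneg (α 4 + 2)]
      omega
    have s5 : α 5 * α 5 ≤ 3 := by linarith [h1, ha0sq, sq_nonneg (α 1), sq_nonneg (α 2), sq_nonneg (α 3), sq_nonneg (α 4), sq_nonneg (α 6)]
    have c5 : -1 ≤ α 5 ∧ α 5 ≤ 1 := by
      have u : 4 * α 5 ≤ 7 := by linarith [s5, sq_nonneg (α 5 - 2)]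
      have l : -7 ≤ 4 * α 5 := by linarith [s5, sq_nonneg (α 5 + 2)]
      omega
    have s6 : α 6 * α 6 ≤ 3 := by linarith [h1, ha0sq, sq_nonneg (α 1), sq_nonneg (α 2), sq_nonneg (α 3), sq_nonneg (α 4), sq_nonneg (α 5)]
    have c6 : -1 ≤ α 6 ∧ α 6 ≤ 1 := by
      have u : 4 * α 6 ≤ 7 := by linarith [s6, sq_nonneg (α 6 - 2)]
      have l : -7 ≤ 4 * α 6 := by linarith [s6, sq_nonneg (α 6 + 2)]
      omega
    obtain ⟨g0, e0⟩ := tz_surj (α 0) h0.1 h0.2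
    obtain ⟨g1, e1⟩ := tz_surj (α 1) c1.1 c1.2
    obtain ⟨g2, e2⟩ := tz_surj (α 2) c2.1 c2.2
    obtain ⟨g3, e3⟩ := tz_surj (α 3) c3.1 c3.2
    obtain ⟨g4, e4⟩ := tz_surj (α 4) c4.1 c4.2
    obtain ⟨g5, e5⟩ := tz_surj (α 5) c5.1 c5.2
    obtain ⟨g6, e6⟩ := tz_surj (α 6) c6.1 c6.2
    rw [vec_eta α, ← e0, ← e1, ← e2, ← e3, ← e4, ← e5, ← e6]
    rw [← e0, ← e1, ← e2, ← e3, ← e4, ← e5, ← e6] at h1 h2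
    exact big g0 g1 g2 g3 g4 g5 g6 h1 h2

lemma Lsub : ∀ α ∈ Lf, Ip α α = -2 ∧ Ip α hcl = 0 := by decide

lemma hR : Rset = ↑Lf := by
  ext α
  exact ⟨fun h => Rsub α h, fun h => Lsub α h⟩

/-- W_e = ⟨r1, r2⟩ is generated by the two commuting involutions r1, r2 (a 2A₁
sub-root-system), so the W_e-orbit of a root α is {α, r1 α, r2 α, r1 (r2 α)}.
The action of W_e on the 72 roots has exactly 36 orbits. -/
theorem twoA1_orbits :
    (∀ β, r1 (r2 β) = r2 (r1 β)) ∧ (∀ β, r1 (r1 β) = β) ∧ (∀ β, r2 (r2 β) = β) ∧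
    {S : Set (Fin 7 → ℤ) |
        ∃ α ∈ Rset, S = {α, r1 α, r2 α, r1 (r2 α)}}.ncard = 36 := by
  refine ⟨?_, ?_, ?_, ?_⟩
  · intro β; rw [r1_eq, r2_eq]; funext i; fin_cases i <;> rfl
  · intro β; rw [r1_eq]; funext i; fin_cases i <;> rfl
  · intro β; rw [r2_eq]; funext i; fin_cases i <;> rfl
  · have hfam : {S : Set (Fin 7 → ℤ) | ∃ α ∈ Rset, S = {α, r1 α, r2 α, r1 (r2 α)}}
        = (fun t : Finset (Fin 7 → ℤ) => (↑t : Set (Fin 7 → ℤ))) '' ↑(Lf.image orbF) := by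
      ext S
      constructor
      · rintro ⟨α, hα, rfl⟩
        refine ⟨orbF α, Finset.mem_coe.mpr (Finset.mem_image_of_mem _ (Rsub α hα)), ?_⟩
        rw [r1_eq, r2_eq]
        simp [orbF]
      · rintro ⟨t, ht, rfl⟩
        obtain ⟨α, hαL, rfl⟩ := Finset.mem_image.mp (Finset.mem_coe.mp ht)
        refine ⟨α, by rw [hR]; exact hαL, ?_⟩
        rw [r1_eq, r2_eq]
        simp [orbF]
    rw [hfam, Set.ncard_image_of_injective _ Finset.coe_injective, Set.ncard_coe_finset]
    decide
end
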